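/- Let T > 0, Ā > 0, L₀ ≥ 0 and L ≥ 0. Let K : [0,T] × [0,1] × ℝ² → ℝ² be such that (i) for each (t,z), the map y ↦ K(t,y,z) is measurable; (ii) whenever both coordinates of z have absolute value at most Ā, both coordinates of K(t,y,z) have absolute value at most Ā; (iii) |K(t,y,z) − K(t',y,z')|₁ ≤ L₀|t − t'| + L|z − z'|₁ for all y ∈ [0,1], t, t' ∈ [0,T], and all z, z' with coordinates in [−Ā, Ā], where |·|₁ is the 1-norm on ℝ². Let w : [0,1]² → [0,1] be measurable. Then the map Φ defined by Φ(Z)(t)(x) := ∫₀¹ w(x,y) K(t, y, Z(t)(y)) dy sends 𝒵 into 𝒵 and satisfies ‖Φ(Z¹) − Φ(Z²)‖_𝒵 ≤ L ‖Z¹ − Z²‖_𝒵 for all Z¹, Z² ∈ 𝒵; consequently, if L < 1, Φ has a unique fixed point in 𝒵. -/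

import Mathlib

open MeasureTheory

/-- Lebesgue measure restricted to `I = [0,1]`. -/
noncomputable def mu01 : Measure ℝ := volume.restrict (Set.Icc (0:ℝ) 1)

/-- The norm `‖f‖_𝒵 := sup_{t ∈ [0,T]} ∫_I |f(t)(x)| dx`, where `|·|` is the 1-norm on `ℝ²`. -/
noncomputable def Znorm (T : ℝ) (f : ℝ → Lp (ℝ × ℝ) 2 mu01) : ℝ :=
  ⨆ t : Set.Icc (0:ℝ) T, ∫ x, (|(f t.1 x).1| + |(f t.1 x).2|) ∂mu01

/-- Membership in `𝒵`: `f : [0,T] → L²(I; ℝ×ℝ)` is continuous and for every `t ∈ [0,T]` and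
almost every `x ∈ I` both coordinates of `f(t)(x)` are bounded in absolute value by `Ā`. -/
def memZ (T Abar : ℝ) (f : ℝ → Lp (ℝ × ℝ) 2 mu01) : Prop :=
  ContinuousOn f (Set.Icc 0 T) ∧
    ∀ t ∈ Set.Icc (0:ℝ) T, ∀ᵐ x ∂mu01, |(f t x).1| ≤ Abar ∧ |(f t x).2| ≤ Abar

instance : IsProbabilityMeasure mu01 := by
  constructor
  rw [mu01, Measure.restrict_apply_univ, Real.volume_Icc]
  norm_num

noncomputable def clampR (A a : ℝ) : ℝ := max (-A) (min A a)
noncomputable def clampP (A : ℝ) (z : ℝ × ℝ) : ℝ × ℝ := (clampR A z.1, clampR A z.2)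
noncomputable def tproj (T t : ℝ) : ℝ := max 0 (min T t)

lemma abs_clampR {A : ℝ} (hA : 0 ≤ A) (a : ℝ) : |clampR A a| ≤ A := by
  rw [abs_le, clampR]
  refine ⟨le_max_left _ _, max_le (by linarith) (min_le_left _ _)⟩

lemma clampR_eq {A a : ℝ} (h : |a| ≤ A) : clampR A a = a := by
  rw [abs_le] at h
  rw [clampR, min_eq_right h.2, max_eq_right h.1]

lemma abs_clampR_sub (A a b : ℝ) : |clampR A a - clampR A b| ≤ |a - b| := by
  unfold clampR
  refine (abs_max_sub_max_le_max _ _ _ _).trans (max_le (by simp) ?_)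
  refine (abs_min_sub_min_le_max _ _ _ _).trans (max_le (by simp) le_rfl)

lemma tproj_mem {T : ℝ} (hT : 0 ≤ T) (t : ℝ) : tproj T t ∈ Set.Icc 0 T :=
  ⟨le_max_left _ _, max_le hT (min_le_left _ _)⟩

lemma tproj_eq {T t : ℝ} (h : t ∈ Set.Icc 0 T) : tproj T t = t := by
  rw [tproj, min_eq_right h.2, max_eq_right h.1]

lemma abs_tproj_sub (T a b : ℝ) : |tproj T a - tproj T b| ≤ |a - b| := by
  unfold tproj
  refine (abs_max_sub_max_le_max _ _ _ _).trans (max_le (by simp) ?_)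
  refine (abs_min_sub_min_le_max _ _ _ _).trans (max_le (by simp) le_rfl)

lemma tproj_idem {T : ℝ} (hT : 0 ≤ T) (t : ℝ) : tproj T (tproj T t) = tproj T t :=
  tproj_eq (tproj_mem hT t)

lemma continuous_clampP (A : ℝ) : Continuous (clampP A) := by
  unfold clampP clampR; fun_prop

lemma measurable_tproj (T : ℝ) : Measurable (tproj T) := by
  unfold tproj; fun_prop
section
variable {E : Type*} [NormedAddCommGroup E]

-- helper: bounded a.e.-strongly-measurable functions are integrable on mu01-like prob measures
lemma integrable_of_bdd {μ : Measure ℝ} [IsFiniteMeasure μ] {f : ℝ → E} (C : ℝ)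
    (hm : AEStronglyMeasurable f μ) (hb : ∀ x, ‖f x‖ ≤ C) : Integrable f μ :=
  memLp_one_iff_integrable.mp (MemLp.of_bound hm C (Filter.Eventually.of_forall hb))

lemma integrable_of_ae_bdd {μ : Measure ℝ} [IsFiniteMeasure μ] {f : ℝ → E} (C : ℝ)
    (hm : AEStronglyMeasurable f μ) (hb : ∀ᵐ x ∂μ, ‖f x‖ ≤ C) : Integrable f μ :=
  memLp_one_iff_integrable.mp (MemLp.of_bound hm C hb)
end

-- norm facts on ℝ × ℝ
lemma prod_norm_le_add (z : ℝ × ℝ) : ‖z‖ ≤ |z.1| + |z.2| := by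
  rw [Prod.norm_def]
  exact max_le (by simpa using le_add_of_nonneg_right (abs_nonneg _))
    (by simpa using le_add_of_nonneg_left (abs_nonneg _))

lemma prod_add_le_norm (z : ℝ × ℝ) : |z.1| + |z.2| ≤ 2 * ‖z‖ := by
  rw [Prod.norm_def]
  have h1 : |z.1| ≤ max ‖z.1‖ ‖z.2‖ := le_max_of_le_left (by simp [Real.norm_eq_abs])
  have h2 : |z.2| ≤ max ‖z.1‖ ‖z.2‖ := le_max_of_le_right (by simp [Real.norm_eq_abs])
  linarith

noncomputable def Kc (K : ℝ → ℝ → ℝ × ℝ → ℝ × ℝ) (T A t y : ℝ) (z : ℝ × ℝ) : ℝ × ℝ :=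
  K (tproj T t) (tproj 1 y) (clampP A z)

noncomputable def Grep (T A : ℝ) (W : ℝ → Lp (ℝ × ℝ) 2 mu01) (t : ℝ) : ℝ → ℝ × ℝ :=
  fun y => clampP A ((Lp.aestronglyMeasurable (W (tproj T t))).mk (W (tproj T t)) y)

noncomputable def Ffun (K : ℝ → ℝ → ℝ × ℝ → ℝ × ℝ) (w : ℝ → ℝ → ℝ) (T A : ℝ)
    (W : ℝ → Lp (ℝ × ℝ) 2 mu01) (t : ℝ) : ℝ × ℝ → ℝ × ℝ :=
  fun p => w p.1 p.2 • Kc K T A t p.2 (Grep T A W t p.2)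

noncomputable def gfun (K : ℝ → ℝ → ℝ × ℝ → ℝ × ℝ) (w : ℝ → ℝ → ℝ) (T A : ℝ)
    (W : ℝ → Lp (ℝ × ℝ) 2 mu01) (t x : ℝ) : ℝ × ℝ :=
  ∫ y, Ffun K w T A W t (x, y) ∂mu01

section main
variable {T Abar L0 L : ℝ} {K : ℝ → ℝ → ℝ × ℝ → ℝ × ℝ} {w : ℝ → ℝ → ℝ}
  {W W1 W2 : ℝ → Lp (ℝ × ℝ) 2 mu01} {t t1 t2 : ℝ}

lemma Grep_sm : StronglyMeasurable (Grep T Abar W t) :=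
  (continuous_clampP Abar).comp_stronglyMeasurable
    (AEStronglyMeasurable.stronglyMeasurable_mk _)

lemma Grep_bd (hA : 0 ≤ Abar) (y : ℝ) :
    |(Grep T Abar W t y).1| ≤ Abar ∧ |(Grep T Abar W t y).2| ≤ Abar :=
  ⟨abs_clampR hA _, abs_clampR hA _⟩

lemma Grep_ae : Grep T Abar W t =ᵐ[mu01] fun y => clampP Abar (W (tproj T t) y) := by
  filter_upwards [(Lp.aestronglyMeasurable (W (tproj T t))).ae_eq_mk] with y hy
  rw [Grep, ← hy]

lemma Kc_meas (hKmeas : ∀ (t : ℝ) (z : ℝ × ℝ), Measurable fun y => K t y z) (z : ℝ × ℝ) :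
    Measurable fun y => Kc K T Abar t y z :=
  (hKmeas (tproj T t) (clampP Abar z)).comp (measurable_tproj 1)

lemma Kc_bd (hA : 0 ≤ Abar)
    (hKbd : ∀ (t y : ℝ) (z : ℝ × ℝ), |z.1| ≤ Abar → |z.2| ≤ Abar →
      |(K t y z).1| ≤ Abar ∧ |(K t y z).2| ≤ Abar) (y : ℝ) (z : ℝ × ℝ) :
    |(Kc K T Abar t y z).1| ≤ Abar ∧ |(Kc K T Abar t y z).2| ≤ Abar :=
  hKbd _ _ _ (abs_clampR hA _) (abs_clampR hA _)

lemma Kc_norm_le (hA : 0 ≤ Abar)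
    (hKbd : ∀ (t y : ℝ) (z : ℝ × ℝ), |z.1| ≤ Abar → |z.2| ≤ Abar →
      |(K t y z).1| ≤ Abar ∧ |(K t y z).2| ≤ Abar) (y : ℝ) (z : ℝ × ℝ) :
    ‖Kc K T Abar t y z‖ ≤ Abar := by
  rw [Prod.norm_def]
  exact max_le (by simpa [Real.norm_eq_abs] using (Kc_bd hA hKbd y z).1)
    (by simpa [Real.norm_eq_abs] using (Kc_bd hA hKbd y z).2)

lemma Kc_lip (hT : 0 ≤ T) (hA : 0 ≤ Abar)
    (hKlip : ∀ y ∈ Set.Icc (0:ℝ) 1, ∀ t ∈ Set.Icc (0:ℝ) T, ∀ t' ∈ Set.Icc (0:ℝ) T,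
      ∀ z z' : ℝ × ℝ, |z.1| ≤ Abar → |z.2| ≤ Abar → |z'.1| ≤ Abar → |z'.2| ≤ Abar →
        |(K t y z).1 - (K t' y z').1| + |(K t y z).2 - (K t' y z').2|
          ≤ L0 * |t - t'| + L * (|z.1 - z'.1| + |z.2 - z'.2|))
    (hL : 0 ≤ L) (y : ℝ) (z z' : ℝ × ℝ) :
    |(Kc K T Abar t1 y z).1 - (Kc K T Abar t2 y z').1|
      + |(Kc K T Abar t1 y z).2 - (Kc K T Abar t2 y z').2|
      ≤ L0 * |tproj T t1 - tproj T t2| + L * (|z.1 - z'.1| + |z.2 - z'.2|) := by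
  refine le_trans (hKlip (tproj 1 y) (tproj_mem zero_le_one y) _ (tproj_mem hT t1)
    _ (tproj_mem hT t2) _ _ (abs_clampR hA _) (abs_clampR hA _)
    (abs_clampR hA _) (abs_clampR hA _)) ?_
  have h1 := abs_clampR_sub Abar z.1 z'.1
  have h2 := abs_clampR_sub Abar z.2 z'.2
  have : |(clampP Abar z).1 - (clampP Abar z').1| + |(clampP Abar z).2 - (clampP Abar z').2|
      ≤ |z.1 - z'.1| + |z.2 - z'.2| := by
    simp only [clampP]; exact add_le_add h1 h2
  nlinarith [abs_nonneg (tproj T t1 - tproj T t2)]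

lemma Kc_cont (hT : 0 ≤ T) (hA : 0 ≤ Abar)
    (hKlip : ∀ y ∈ Set.Icc (0:ℝ) 1, ∀ t ∈ Set.Icc (0:ℝ) T, ∀ t' ∈ Set.Icc (0:ℝ) T,
      ∀ z z' : ℝ × ℝ, |z.1| ≤ Abar → |z.2| ≤ Abar → |z'.1| ≤ Abar → |z'.2| ≤ Abar →
        |(K t y z).1 - (K t' y z').1| + |(K t y z).2 - (K t' y z').2|
          ≤ L0 * |t - t'| + L * (|z.1 - z'.1| + |z.2 - z'.2|))
    (hL : 0 ≤ L) (y : ℝ) : Continuous fun z => Kc K T Abar t y z := by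
  refine (LipschitzWith.of_dist_le_mul (K := ⟨2 * L, by positivity⟩) fun z z' => ?_).continuous
  have h := Kc_lip (t1 := t) (t2 := t) hT hA hKlip hL y z z'
  simp only [sub_self, abs_zero, mul_zero, zero_add] at h
  calc dist (Kc K T Abar t y z) (Kc K T Abar t y z')
      = ‖Kc K T Abar t y z - Kc K T Abar t y z'‖ := dist_eq_norm _ _
    _ ≤ |(Kc K T Abar t y z - Kc K T Abar t y z').1|
        + |(Kc K T Abar t y z - Kc K T Abar t y z').2| := prod_norm_le_add _
    _ ≤ L * (|z.1 - z'.1| + |z.2 - z'.2|) := by simpa using h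
    _ ≤ L * (2 * ‖z - z'‖) := by
        refine mul_le_mul_of_nonneg_left ?_ hL
        simpa using prod_add_le_norm (z - z')
    _ = (2 * L) * dist z z' := by rw [dist_eq_norm]; ring


lemma Ffun_meas (hKmeas : ∀ (t : ℝ) (z : ℝ × ℝ), Measurable fun y => K t y z)
    (hwmeas : Measurable (Function.uncurry w))
    (hT : 0 ≤ T) (hA : 0 ≤ Abar)
    (hKlip : ∀ y ∈ Set.Icc (0:ℝ) 1, ∀ t ∈ Set.Icc (0:ℝ) T, ∀ t' ∈ Set.Icc (0:ℝ) T,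
      ∀ z z' : ℝ × ℝ, |z.1| ≤ Abar → |z.2| ≤ Abar → |z'.1| ≤ Abar → |z'.2| ≤ Abar →
        |(K t y z).1 - (K t' y z').1| + |(K t y z).2 - (K t' y z').2|
          ≤ L0 * |t - t'| + L * (|z.1 - z'.1| + |z.2 - z'.2|))
    (hL : 0 ≤ L) :
    Measurable (Ffun K w T Abar W t) := by
  have hu : Measurable (Function.uncurry fun (z : ℝ × ℝ) (y : ℝ) => Kc K T Abar t y z) :=
    measurable_uncurry_of_continuous_of_measurable
      (fun y => Kc_cont hT hA hKlip hL y) (fun z => Kc_meas hKmeas z)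
  have hG : Measurable (Grep T Abar W t) := Grep_sm.measurable
  have h1 : Measurable fun p : ℝ × ℝ => Kc K T Abar t p.2 (Grep T Abar W t p.2) :=
    hu.comp ((hG.comp measurable_snd).prodMk measurable_snd)
  exact hwmeas.smul h1

lemma Ffun_bd (hA : 0 ≤ Abar)
    (hKbd : ∀ (t y : ℝ) (z : ℝ × ℝ), |z.1| ≤ Abar → |z.2| ≤ Abar →
      |(K t y z).1| ≤ Abar ∧ |(K t y z).2| ≤ Abar)
    (hw : ∀ x y, w x y ∈ Set.Icc (0:ℝ) 1) (p : ℝ × ℝ) :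
    ‖Ffun K w T Abar W t p‖ ≤ Abar := by
  rw [Ffun, norm_smul]
  have h1 : ‖w p.1 p.2‖ ≤ 1 := by
    rw [Real.norm_eq_abs, abs_le]
    exact ⟨by linarith [(hw p.1 p.2).1], (hw p.1 p.2).2⟩
  calc ‖w p.1 p.2‖ * ‖Kc K T Abar t p.2 (Grep T Abar W t p.2)‖
      ≤ 1 * Abar := mul_le_mul h1 (Kc_norm_le hA hKbd _ _) (norm_nonneg _) zero_le_one
    _ = Abar := one_mul _


structure Hyp (T Abar L0 L : ℝ) (K : ℝ → ℝ → ℝ × ℝ → ℝ × ℝ) (w : ℝ → ℝ → ℝ) : Prop where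
  hT : 0 < T
  hA : 0 < Abar
  hL0 : 0 ≤ L0
  hL : 0 ≤ L
  hKmeas : ∀ (t : ℝ) (z : ℝ × ℝ), Measurable fun y => K t y z
  hKbd : ∀ (t y : ℝ) (z : ℝ × ℝ), |z.1| ≤ Abar → |z.2| ≤ Abar →
      |(K t y z).1| ≤ Abar ∧ |(K t y z).2| ≤ Abar
  hKlip : ∀ y ∈ Set.Icc (0:ℝ) 1, ∀ t ∈ Set.Icc (0:ℝ) T, ∀ t' ∈ Set.Icc (0:ℝ) T,
      ∀ z z' : ℝ × ℝ, |z.1| ≤ Abar → |z.2| ≤ Abar → |z'.1| ≤ Abar → |z'.2| ≤ Abar →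
        |(K t y z).1 - (K t' y z').1| + |(K t y z).2 - (K t' y z').2|
          ≤ L0 * |t - t'| + L * (|z.1 - z'.1| + |z.2 - z'.2|)
  hwmeas : Measurable (Function.uncurry w)
  hw : ∀ x y, w x y ∈ Set.Icc (0:ℝ) 1

variable {H : Hyp T Abar L0 L K w}

lemma Ffun_meas' (H : Hyp T Abar L0 L K w) : Measurable (Ffun K w T Abar W t) :=
  Ffun_meas H.hKmeas H.hwmeas H.hT.le H.hA.le H.hKlip H.hL

lemma Ffun_int (H : Hyp T Abar L0 L K w) (x : ℝ) :
    Integrable (fun y => Ffun K w T Abar W t (x, y)) mu01 :=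
  integrable_of_bdd Abar
    ((Ffun_meas' (W := W) (t := t) H).comp (measurable_prodMk_left)).aestronglyMeasurable
    (fun y => Ffun_bd H.hA.le H.hKbd H.hw _)

lemma gfun_sm (H : Hyp T Abar L0 L K w) : StronglyMeasurable (gfun K w T Abar W t) :=
  (Ffun_meas' (W := W) (t := t) H).stronglyMeasurable.integral_prod_right'

lemma gfun_bd (H : Hyp T Abar L0 L K w) (x : ℝ) :
    |(gfun K w T Abar W t x).1| ≤ Abar ∧ |(gfun K w T Abar W t x).2| ≤ Abar := by
  have hint := Ffun_int (W := W) (t := t) H x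
  have h1 : (gfun K w T Abar W t x).1
      = ∫ y, (Ffun K w T Abar W t (x, y)).1 ∂mu01 := by
    rw [gfun]; exact ((ContinuousLinearMap.fst ℝ ℝ ℝ).integral_comp_comm hint).symm
  have h2 : (gfun K w T Abar W t x).2
      = ∫ y, (Ffun K w T Abar W t (x, y)).2 ∂mu01 := by
    rw [gfun]; exact ((ContinuousLinearMap.snd ℝ ℝ ℝ).integral_comp_comm hint).symm
  constructor
  · rw [h1, ← Real.norm_eq_abs]
    calc ‖∫ y, (Ffun K w T Abar W t (x, y)).1 ∂mu01‖
        ≤ Abar * (mu01 Set.univ).toReal := by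
          refine norm_integral_le_of_norm_le_const (Filter.Eventually.of_forall fun y => ?_)
          calc ‖(Ffun K w T Abar W t (x, y)).1‖ ≤ ‖Ffun K w T Abar W t (x, y)‖ := norm_fst_le _
            _ ≤ Abar := Ffun_bd H.hA.le H.hKbd H.hw _
      _ = Abar := by simp
  · rw [h2, ← Real.norm_eq_abs]
    calc ‖∫ y, (Ffun K w T Abar W t (x, y)).2 ∂mu01‖
        ≤ Abar * (mu01 Set.univ).toReal := by
          refine norm_integral_le_of_norm_le_const (Filter.Eventually.of_forall fun y => ?_)
          calc ‖(Ffun K w T Abar W t (x, y)).2‖ ≤ ‖Ffun K w T Abar W t (x, y)‖ := norm_snd_le _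
            _ ≤ Abar := Ffun_bd H.hA.le H.hKbd H.hw _
      _ = Abar := by simp

lemma gfun_norm_le (H : Hyp T Abar L0 L K w) (x : ℝ) : ‖gfun K w T Abar W t x‖ ≤ Abar := by
  rw [Prod.norm_def]
  exact max_le (by simpa [Real.norm_eq_abs] using (gfun_bd (W := W) (t := t) H x).1)
    (by simpa [Real.norm_eq_abs] using (gfun_bd (W := W) (t := t) H x).2)

lemma gfun_mem (H : Hyp T Abar L0 L K w) : MemLp (gfun K w T Abar W t) 2 mu01 :=
  MemLp.of_bound (gfun_sm (W := W) (t := t) H).aestronglyMeasurable Abar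
    (Filter.Eventually.of_forall (gfun_norm_le (W := W) (t := t) H))

noncomputable def PhiMap (H : Hyp T Abar L0 L K w) (W : ℝ → Lp (ℝ × ℝ) 2 mu01) (t : ℝ) :
    Lp (ℝ × ℝ) 2 mu01 :=
  (gfun_mem (W := W) (t := t) H).toLp _

lemma PhiMap_ae (H : Hyp T Abar L0 L K w) :
    PhiMap H W t =ᵐ[mu01] gfun K w T Abar W t :=
  (gfun_mem (W := W) (t := t) H).coeFn_toLp

noncomputable def D1 (F G : ℝ → ℝ × ℝ) : ℝ :=
  ∫ y, (|(F y).1 - (G y).1| + |(F y).2 - (G y).2|) ∂mu01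

lemma D1_nonneg (F G : ℝ → ℝ × ℝ) : 0 ≤ D1 F G :=
  integral_nonneg fun y => by positivity

lemma D1_int (H : Hyp T Abar L0 L K w) {W1 W2 : ℝ → Lp (ℝ × ℝ) 2 mu01} {t1 t2 : ℝ} :
    Integrable (fun y => |(Grep T Abar W1 t1 y).1 - (Grep T Abar W2 t2 y).1|
      + |(Grep T Abar W1 t1 y).2 - (Grep T Abar W2 t2 y).2|) mu01 := by
  refine integrable_of_bdd (4 * Abar) ?_ ?_
  · have h1 : Measurable (Grep T Abar W1 t1) := Grep_sm.measurable
    have h2 : Measurable (Grep T Abar W2 t2) := Grep_sm.measurable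
    exact (((h1.fst.sub h2.fst).abs.add (h1.snd.sub h2.snd).abs)).aestronglyMeasurable
  · intro y
    have b1 := Grep_bd (T := T) (W := W1) (t := t1) H.hA.le y
    have b2 := Grep_bd (T := T) (W := W2) (t := t2) H.hA.le y
    rw [Real.norm_eq_abs, abs_of_nonneg (by positivity)]
    have := abs_sub (Grep T Abar W1 t1 y).1 (Grep T Abar W2 t2 y).1
    have := abs_sub (Grep T Abar W1 t1 y).2 (Grep T Abar W2 t2 y).2
    linarith [abs_sub_abs_le_abs_sub (Grep T Abar W1 t1 y).1 (Grep T Abar W2 t2 y).1,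
      abs_sub_le (Grep T Abar W1 t1 y).1 0 (Grep T Abar W2 t2 y).1,
      abs_sub_le (Grep T Abar W1 t1 y).2 0 (Grep T Abar W2 t2 y).2]

lemma key_est (H : Hyp T Abar L0 L K w) (W1 W2 : ℝ → Lp (ℝ × ℝ) 2 mu01) (t1 t2 x : ℝ) :
    |(gfun K w T Abar W1 t1 x).1 - (gfun K w T Abar W2 t2 x).1|
      + |(gfun K w T Abar W1 t1 x).2 - (gfun K w T Abar W2 t2 x).2|
      ≤ L0 * |tproj T t1 - tproj T t2|
        + L * D1 (Grep T Abar W1 t1) (Grep T Abar W2 t2) := by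
  set F1 := fun y => Ffun K w T Abar W1 t1 (x, y) with hF1
  set F2 := fun y => Ffun K w T Abar W2 t2 (x, y) with hF2
  have int1 : Integrable F1 mu01 := Ffun_int (W := W1) (t := t1) H x
  have int2 : Integrable F2 mu01 := Ffun_int (W := W2) (t := t2) H x
  have hsub : gfun K w T Abar W1 t1 x - gfun K w T Abar W2 t2 x
      = ∫ y, (F1 y - F2 y) ∂mu01 := by
    rw [gfun, gfun, integral_sub int1 int2]
  have h1 : (gfun K w T Abar W1 t1 x).1 - (gfun K w T Abar W2 t2 x).1
      = ∫ y, ((F1 y).1 - (F2 y).1) ∂mu01 := by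
    rw [← Prod.fst_sub, hsub]
    exact ((ContinuousLinearMap.fst ℝ ℝ ℝ).integral_comp_comm (int1.sub int2)).symm
  have h2 : (gfun K w T Abar W1 t1 x).2 - (gfun K w T Abar W2 t2 x).2
      = ∫ y, ((F1 y).2 - (F2 y).2) ∂mu01 := by
    rw [← Prod.snd_sub, hsub]
    exact ((ContinuousLinearMap.snd ℝ ℝ ℝ).integral_comp_comm (int1.sub int2)).symm
  have m1 : Measurable F1 := (Ffun_meas' (W := W1) (t := t1) H).comp measurable_prodMk_left
  have m2 : Measurable F2 := (Ffun_meas' (W := W2) (t := t2) H).comp measurable_prodMk_left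
  have ia : Integrable (fun y => |(F1 y).1 - (F2 y).1|) mu01 := by
    refine integrable_of_bdd (2 * Abar) ((m1.fst.sub m2.fst).abs).aestronglyMeasurable fun y => ?_
    rw [Real.norm_eq_abs, abs_abs]
    have b1 : ‖F1 y‖ ≤ Abar := Ffun_bd (W := W1) (t := t1) H.hA.le H.hKbd H.hw _
    have b2 : ‖F2 y‖ ≤ Abar := Ffun_bd (W := W2) (t := t2) H.hA.le H.hKbd H.hw _
    have := norm_fst_le (F1 y); have := norm_fst_le (F2 y)
    have : |(F1 y).1| ≤ Abar := by
      rw [← Real.norm_eq_abs]; exact (norm_fst_le (F1 y)).trans b1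
    have : |(F2 y).1| ≤ Abar := by
      rw [← Real.norm_eq_abs]; exact (norm_fst_le (F2 y)).trans b2
    have := abs_sub_le (F1 y).1 0 (F2 y).1
    simp only [sub_zero, zero_sub, abs_neg] at this
    linarith
  have ib : Integrable (fun y => |(F1 y).2 - (F2 y).2|) mu01 := by
    refine integrable_of_bdd (2 * Abar) ((m1.snd.sub m2.snd).abs).aestronglyMeasurable fun y => ?_
    rw [Real.norm_eq_abs, abs_abs]
    have b1 : ‖F1 y‖ ≤ Abar := Ffun_bd (W := W1) (t := t1) H.hA.le H.hKbd H.hw _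
    have b2 : ‖F2 y‖ ≤ Abar := Ffun_bd (W := W2) (t := t2) H.hA.le H.hKbd H.hw _
    have : |(F1 y).2| ≤ Abar := by
      rw [← Real.norm_eq_abs]; exact (norm_snd_le (F1 y)).trans b1
    have : |(F2 y).2| ≤ Abar := by
      rw [← Real.norm_eq_abs]; exact (norm_snd_le (F2 y)).trans b2
    have := abs_sub_le (F1 y).2 0 (F2 y).2
    simp only [sub_zero, zero_sub, abs_neg] at this
    linarith
  have step1 : |(gfun K w T Abar W1 t1 x).1 - (gfun K w T Abar W2 t2 x).1|
        + |(gfun K w T Abar W1 t1 x).2 - (gfun K w T Abar W2 t2 x).2|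
      ≤ ∫ y, (|(F1 y).1 - (F2 y).1| + |(F1 y).2 - (F2 y).2|) ∂mu01 := by
    rw [h1, h2, integral_add ia ib]
    have e1 : |∫ y, ((F1 y).1 - (F2 y).1) ∂mu01| ≤ ∫ y, |(F1 y).1 - (F2 y).1| ∂mu01 := by
      simpa [Real.norm_eq_abs] using
        norm_integral_le_integral_norm (μ := mu01) (f := fun y => (F1 y).1 - (F2 y).1)
    have e2 : |∫ y, ((F1 y).2 - (F2 y).2) ∂mu01| ≤ ∫ y, |(F1 y).2 - (F2 y).2| ∂mu01 := by
      simpa [Real.norm_eq_abs] using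
        norm_integral_le_integral_norm (μ := mu01) (f := fun y => (F1 y).2 - (F2 y).2)
    linarith
  refine step1.trans ?_
  -- pointwise estimate and integral monotonicity
  have ptwise : ∀ y, |(F1 y).1 - (F2 y).1| + |(F1 y).2 - (F2 y).2|
      ≤ L0 * |tproj T t1 - tproj T t2|
        + L * (|(Grep T Abar W1 t1 y).1 - (Grep T Abar W2 t2 y).1|
          + |(Grep T Abar W1 t1 y).2 - (Grep T Abar W2 t2 y).2|) := by
    intro y
    have hKl := Kc_lip (t1 := t1) (t2 := t2) H.hT.le H.hA.le H.hKlip H.hL y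
      (Grep T Abar W1 t1 y) (Grep T Abar W2 t2 y)
    set a := Kc K T Abar t1 y (Grep T Abar W1 t1 y) with ha
    set b := Kc K T Abar t2 y (Grep T Abar W2 t2 y) with hb
    have hw1 : |w x y| ≤ 1 := by
      rw [abs_le]; exact ⟨by linarith [(H.hw x y).1], (H.hw x y).2⟩
    have hF1e : F1 y = w x y • a := rfl
    have hF2e : F2 y = w x y • b := rfl
    have hc1 : |(F1 y).1 - (F2 y).1| = |w x y| * |a.1 - b.1| := by
      rw [hF1e, hF2e, ← abs_mul]
      congr 1
      simp [Prod.smul_def, smul_eq_mul]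
      ring
    have hc2 : |(F1 y).2 - (F2 y).2| = |w x y| * |a.2 - b.2| := by
      rw [hF1e, hF2e, ← abs_mul]
      congr 1
      simp [Prod.smul_def, smul_eq_mul]
      ring
    have habs : |(F1 y).1 - (F2 y).1| + |(F1 y).2 - (F2 y).2| ≤ |a.1 - b.1| + |a.2 - b.2| := by
      rw [hc1, hc2]
      have n1 : (0:ℝ) ≤ |a.1 - b.1| := abs_nonneg _
      have n2 : (0:ℝ) ≤ |a.2 - b.2| := abs_nonneg _
      nlinarith [abs_nonneg (w x y)]
    exact habs.trans hKl
  have irhs : Integrable (fun y => L0 * |tproj T t1 - tproj T t2|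
      + L * (|(Grep T Abar W1 t1 y).1 - (Grep T Abar W2 t2 y).1|
        + |(Grep T Abar W1 t1 y).2 - (Grep T Abar W2 t2 y).2|)) mu01 :=
    (integrable_const _).add ((D1_int (W1 := W1) (W2 := W2) (t1 := t1) (t2 := t2) H).const_mul L)
  have ilhs : Integrable (fun y => |(F1 y).1 - (F2 y).1| + |(F1 y).2 - (F2 y).2|) mu01 :=
    ia.add ib
  calc ∫ y, (|(F1 y).1 - (F2 y).1| + |(F1 y).2 - (F2 y).2|) ∂mu01
      ≤ ∫ y, (L0 * |tproj T t1 - tproj T t2|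
        + L * (|(Grep T Abar W1 t1 y).1 - (Grep T Abar W2 t2 y).1|
          + |(Grep T Abar W1 t1 y).2 - (Grep T Abar W2 t2 y).2|)) ∂mu01 :=
        integral_mono ilhs irhs ptwise
    _ = L0 * |tproj T t1 - tproj T t2| + L * D1 (Grep T Abar W1 t1) (Grep T Abar W2 t2) := by
        rw [integral_add (integrable_const _)
          ((D1_int (W1 := W1) (W2 := W2) (t1 := t1) (t2 := t2) H).const_mul L),
          integral_const, integral_const_mul]
        simp [D1]

lemma mu01_univNNReal : measureUnivNNReal mu01 = 1 := by
  simp [measureUnivNNReal]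

-- (E2)
lemma dist_PhiMap (H : Hyp T Abar L0 L K w) (W1 W2 : ℝ → Lp (ℝ × ℝ) 2 mu01) (t1 t2 : ℝ) :
    dist (PhiMap H W1 t1) (PhiMap H W2 t2)
      ≤ L0 * |tproj T t1 - tproj T t2| + L * D1 (Grep T Abar W1 t1) (Grep T Abar W2 t2) := by
  set C := L0 * |tproj T t1 - tproj T t2| + L * D1 (Grep T Abar W1 t1) (Grep T Abar W2 t2)
    with hC
  have hC0 : 0 ≤ C := by
    have := D1_nonneg (Grep T Abar W1 t1) (Grep T Abar W2 t2)
    have := abs_nonneg (tproj T t1 - tproj T t2)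
    have := H.hL0; have := H.hL
    positivity
  rw [dist_eq_norm]
  have hb : ∀ᵐ x ∂mu01, ‖(PhiMap H W1 t1 - PhiMap H W2 t2 : Lp (ℝ × ℝ) 2 mu01) x‖ ≤ C := by
    filter_upwards [Lp.coeFn_sub (PhiMap H W1 t1) (PhiMap H W2 t2),
      PhiMap_ae (W := W1) (t := t1) H, PhiMap_ae (W := W2) (t := t2) H] with x h1 h2 h3
    rw [h1, Pi.sub_apply, h2, h3]
    refine (prod_norm_le_add _).trans ?_
    simpa using key_est H W1 W2 t1 t2 x
  have := Lp.norm_le_of_ae_bound hC0 hb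
  rw [mu01_univNNReal] at this
  simpa using this

-- (E1)
lemma int_g_le (H : Hyp T Abar L0 L K w) (W1 W2 : ℝ → Lp (ℝ × ℝ) 2 mu01) (t1 t2 : ℝ) :
    ∫ x, (|(gfun K w T Abar W1 t1 x).1 - (gfun K w T Abar W2 t2 x).1|
        + |(gfun K w T Abar W1 t1 x).2 - (gfun K w T Abar W2 t2 x).2|) ∂mu01
      ≤ L0 * |tproj T t1 - tproj T t2| + L * D1 (Grep T Abar W1 t1) (Grep T Abar W2 t2) := by
  set C := L0 * |tproj T t1 - tproj T t2| + L * D1 (Grep T Abar W1 t1) (Grep T Abar W2 t2)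
    with hC
  have g1 := gfun_sm (W := W1) (t := t1) H
  have g2 := gfun_sm (W := W2) (t := t2) H
  have hint : Integrable (fun x => |(gfun K w T Abar W1 t1 x).1 - (gfun K w T Abar W2 t2 x).1|
      + |(gfun K w T Abar W1 t1 x).2 - (gfun K w T Abar W2 t2 x).2|) mu01 := by
    refine integrable_of_bdd (4 * Abar) ?_ fun x => ?_
    · exact (((g1.measurable.fst.sub g2.measurable.fst).abs.add
        (g1.measurable.snd.sub g2.measurable.snd).abs)).aestronglyMeasurable
    · rw [Real.norm_eq_abs, abs_of_nonneg (by positivity)]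
      have b1 := gfun_bd (W := W1) (t := t1) H x
      have b2 := gfun_bd (W := W2) (t := t2) H x
      have e1 := abs_sub_le (gfun K w T Abar W1 t1 x).1 0 (gfun K w T Abar W2 t2 x).1
      have e2 := abs_sub_le (gfun K w T Abar W1 t1 x).2 0 (gfun K w T Abar W2 t2 x).2
      simp only [sub_zero, zero_sub, abs_neg] at e1 e2
      linarith
  calc ∫ x, (|(gfun K w T Abar W1 t1 x).1 - (gfun K w T Abar W2 t2 x).1|
        + |(gfun K w T Abar W1 t1 x).2 - (gfun K w T Abar W2 t2 x).2|) ∂mu01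
      ≤ ∫ _x, C ∂mu01 := integral_mono hint (integrable_const _) (key_est H W1 W2 t1 t2)
    _ = C := by simp

-- (E3)
lemma D1_le_dist (H : Hyp T Abar L0 L K w) (W1 W2 : ℝ → Lp (ℝ × ℝ) 2 mu01) (t1 t2 : ℝ) :
    D1 (Grep T Abar W1 t1) (Grep T Abar W2 t2)
      ≤ 2 * dist (W1 (tproj T t1)) (W2 (tproj T t2)) := by
  set h : Lp (ℝ × ℝ) 2 mu01 := W1 (tproj T t1) - W2 (tproj T t2) with hh
  have hint : Integrable (fun y => (2:ℝ) * ‖h y‖) mu01 := by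
    have : MemLp (⇑h) 1 mu01 :=
      (Lp.memLp h).mono_exponent (by norm_num)
    exact (memLp_one_iff_integrable.mp this).norm.const_mul 2
  have step1 : D1 (Grep T Abar W1 t1) (Grep T Abar W2 t2) ≤ ∫ y, 2 * ‖h y‖ ∂mu01 := by
    refine integral_mono_ae (D1_int (W1 := W1) (W2 := W2) (t1 := t1) (t2 := t2) H) hint ?_
    filter_upwards [Grep_ae (W := W1) (t := t1) (T := T) (Abar := Abar),
      Grep_ae (W := W2) (t := t2) (T := T) (Abar := Abar),
      Lp.coeFn_sub (W1 (tproj T t1)) (W2 (tproj T t2))] with y e1 e2 e3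
    rw [e1, e2]
    have c1 := abs_clampR_sub Abar (W1 (tproj T t1) y).1 (W2 (tproj T t2) y).1
    have c2 := abs_clampR_sub Abar (W1 (tproj T t1) y).2 (W2 (tproj T t2) y).2
    have hnorm : |(W1 (tproj T t1) y).1 - (W2 (tproj T t2) y).1|
        + |(W1 (tproj T t1) y).2 - (W2 (tproj T t2) y).2| ≤ 2 * ‖h y‖ := by
      have := prod_add_le_norm (W1 (tproj T t1) y - W2 (tproj T t2) y)
      simp only [Prod.fst_sub, Prod.snd_sub] at this
      rw [hh, e3]
      simpa using this
    simp only [clampP]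
    refine le_trans (add_le_add c1 c2) hnorm
  refine step1.trans ?_
  rw [integral_const_mul]
  have : ∫ y, ‖h y‖ ∂mu01 ≤ ‖h‖ := by
    rw [integral_norm_eq_lintegral_enorm (Lp.aestronglyMeasurable h), Lp.norm_def]
    refine ENNReal.toReal_mono (Lp.eLpNorm_ne_top h) ?_
    rw [← eLpNorm_one_eq_lintegral_enorm]
    exact eLpNorm_le_eLpNorm_of_exponent_le (by norm_num) (Lp.aestronglyMeasurable h)
  have hd : dist (W1 (tproj T t1)) (W2 (tproj T t2)) = ‖h‖ := dist_eq_norm _ _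
  rw [hd]; linarith

noncomputable def Jint (f : ℝ → Lp (ℝ × ℝ) 2 mu01) (t : ℝ) : ℝ :=
  ∫ x, (|(f t x).1| + |(f t x).2|) ∂mu01

lemma Znorm_eq (T : ℝ) (f : ℝ → Lp (ℝ × ℝ) 2 mu01) :
    Znorm T f = ⨆ t : Set.Icc (0:ℝ) T, Jint f t.1 := rfl

lemma Jint_nonneg (f : ℝ → Lp (ℝ × ℝ) 2 mu01) (t : ℝ) : 0 ≤ Jint f t :=
  integral_nonneg fun x => by positivity

lemma Znorm_nonneg (T : ℝ) (f : ℝ → Lp (ℝ × ℝ) 2 mu01) : 0 ≤ Znorm T f :=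
  Real.iSup_nonneg fun t => Jint_nonneg f t.1

lemma int_abs_coe (h : Lp (ℝ × ℝ) 2 mu01) :
    Integrable (fun x => |(h x).1| + |(h x).2|) mu01 := by
  have h1 : MemLp (⇑h) 1 mu01 := (Lp.memLp h).mono_exponent (by norm_num)
  have hn : Integrable (fun x => 2 * ‖h x‖) mu01 :=
    (memLp_one_iff_integrable.mp h1).norm.const_mul 2
  refine hn.mono' ?_ ?_
  · have hm := Lp.aestronglyMeasurable h
    exact (((continuous_fst.comp_aestronglyMeasurable hm).norm).add
        ((continuous_snd.comp_aestronglyMeasurable hm).norm)).congr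
      (Filter.Eventually.of_forall fun x => by simp [Real.norm_eq_abs])
  · refine Filter.Eventually.of_forall fun x => ?_
    rw [Real.norm_eq_abs, abs_of_nonneg (by positivity)]
    exact prod_add_le_norm _

lemma Grep_memZ_ae (H : Hyp T Abar L0 L K w) {Z : ℝ → Lp (ℝ × ℝ) 2 mu01}
    (hZ : memZ T Abar Z) {t : ℝ} (ht : t ∈ Set.Icc (0:ℝ) T) :
    Grep T Abar Z t =ᵐ[mu01] ⇑(Z t) := by
  have htp : tproj T t = t := tproj_eq ht
  have hbd := hZ.2 t ht
  have h1 : Grep T Abar Z t =ᵐ[mu01] fun y => clampP Abar (Z t y) := by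
    have := Grep_ae (W := Z) (t := t) (T := T) (Abar := Abar)
    rwa [htp] at this
  filter_upwards [h1, hbd] with y e1 e2
  rw [e1, clampP, clampR_eq e2.1, clampR_eq e2.2]

-- the per-time bound giving BddAbove
lemma Jint_sub_le {u v : Lp (ℝ × ℝ) 2 mu01} {B : ℝ}
    (hu : ∀ᵐ x ∂mu01, |(u x).1| ≤ B ∧ |(u x).2| ≤ B)
    (hv : ∀ᵐ x ∂mu01, |(v x).1| ≤ B ∧ |(v x).2| ≤ B) :
    ∫ x, (|((u - v : Lp (ℝ × ℝ) 2 mu01) x).1| + |((u - v : Lp (ℝ × ℝ) 2 mu01) x).2|) ∂mu01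
      ≤ 4 * B := by
  have hle : ∫ x, (|((u - v : Lp (ℝ × ℝ) 2 mu01) x).1|
      + |((u - v : Lp (ℝ × ℝ) 2 mu01) x).2|) ∂mu01 ≤ ∫ _x, 4 * B ∂mu01 := by
    refine integral_mono_ae (int_abs_coe _) (integrable_const _) ?_
    filter_upwards [hu, hv, Lp.coeFn_sub u v] with x e1 e2 e3
    rw [e3, Pi.sub_apply]
    have a1 := abs_sub_le (u x).1 0 (v x).1
    have a2 := abs_sub_le (u x).2 0 (v x).2
    simp only [sub_zero, zero_sub, abs_neg] at a1 a2
    simp only [Prod.fst_sub, Prod.snd_sub]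
    linarith
  simpa using hle

lemma Jint_bddAbove {Z1 Z2 : ℝ → Lp (ℝ × ℝ) 2 mu01}
    (h : ∀ t ∈ Set.Icc (0:ℝ) T, (∀ᵐ x ∂mu01, |(Z1 t x).1| ≤ Abar ∧ |(Z1 t x).2| ≤ Abar)
      ∧ (∀ᵐ x ∂mu01, |(Z2 t x).1| ≤ Abar ∧ |(Z2 t x).2| ≤ Abar)) :
    BddAbove (Set.range fun t : Set.Icc (0:ℝ) T => Jint (fun s => Z1 s - Z2 s) t.1) := by
  refine ⟨4 * Abar, ?_⟩
  rintro _ ⟨t, rfl⟩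
  exact Jint_sub_le (h t.1 t.2).1 (h t.1 t.2).2

-- bullet 3 core computation, for each t ∈ [0,T]
lemma Jint_Phi_le (H : Hyp T Abar L0 L K w) {Z1 Z2 : ℝ → Lp (ℝ × ℝ) 2 mu01}
    (hZ1 : memZ T Abar Z1) (hZ2 : memZ T Abar Z2) {t : ℝ} (ht : t ∈ Set.Icc (0:ℝ) T) :
    Jint (fun s => PhiMap H Z1 s - PhiMap H Z2 s) t
      ≤ L * Jint (fun s => Z1 s - Z2 s) t := by
  have e1 : Jint (fun s => PhiMap H Z1 s - PhiMap H Z2 s) t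
      = ∫ x, (|(gfun K w T Abar Z1 t x).1 - (gfun K w T Abar Z2 t x).1|
        + |(gfun K w T Abar Z1 t x).2 - (gfun K w T Abar Z2 t x).2|) ∂mu01 := by
    refine integral_congr_ae ?_
    filter_upwards [Lp.coeFn_sub (PhiMap H Z1 t) (PhiMap H Z2 t),
      PhiMap_ae (W := Z1) (t := t) H, PhiMap_ae (W := Z2) (t := t) H] with x h1 h2 h3
    rw [h1, Pi.sub_apply, h2, h3]
    simp [Prod.fst_sub, Prod.snd_sub]
  have e2 : D1 (Grep T Abar Z1 t) (Grep T Abar Z2 t) = Jint (fun s => Z1 s - Z2 s) t := by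
    refine integral_congr_ae ?_
    filter_upwards [Grep_memZ_ae H hZ1 ht, Grep_memZ_ae H hZ2 ht,
      Lp.coeFn_sub (Z1 t) (Z2 t)] with y a1 a2 a3
    rw [a1, a2, a3, Pi.sub_apply]
    simp [Prod.fst_sub, Prod.snd_sub]
  have e3 := int_g_le H Z1 Z2 t t
  rw [sub_self, abs_zero, mul_zero, zero_add, e2] at e3
  rw [e1]
  exact e3

-- bullet 3
lemma Znorm_contract (H : Hyp T Abar L0 L K w) {Z1 Z2 : ℝ → Lp (ℝ × ℝ) 2 mu01}
    (hZ1 : memZ T Abar Z1) (hZ2 : memZ T Abar Z2) :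
    Znorm T (fun s => PhiMap H Z1 s - PhiMap H Z2 s)
      ≤ L * Znorm T (fun s => Z1 s - Z2 s) := by
  haveI : Nonempty (Set.Icc (0:ℝ) T) := (Set.nonempty_Icc.2 H.hT.le).to_subtype
  rw [Znorm_eq]
  refine ciSup_le fun t => ?_
  refine (Jint_Phi_le H hZ1 hZ2 t.2).trans ?_
  refine mul_le_mul_of_nonneg_left ?_ H.hL
  rw [Znorm_eq]
  exact le_ciSup (Jint_bddAbove (Abar := Abar) fun s hs => ⟨hZ1.2 s hs, hZ2.2 s hs⟩) t

-- bullet 2: bounds (valid for any W and any t)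
lemma PhiMap_bd (H : Hyp T Abar L0 L K w) (W : ℝ → Lp (ℝ × ℝ) 2 mu01) (t : ℝ) :
    ∀ᵐ x ∂mu01, |(PhiMap H W t x).1| ≤ Abar ∧ |(PhiMap H W t x).2| ≤ Abar := by
  filter_upwards [PhiMap_ae (W := W) (t := t) H] with x hx
  rw [hx]
  exact gfun_bd (W := W) (t := t) H x

lemma dist_PhiMap' (H : Hyp T Abar L0 L K w) (W : ℝ → Lp (ℝ × ℝ) 2 mu01) (s t : ℝ) :
    dist (PhiMap H W s) (PhiMap H W t)
      ≤ L0 * |s - t| + 2 * L * dist (W (tproj T s)) (W (tproj T t)) := by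
  refine (dist_PhiMap H W W s t).trans ?_
  have h1 := abs_tproj_sub T s t
  have h2 := D1_le_dist H W W s t
  have := H.hL0; have := H.hL
  nlinarith [dist_nonneg (x := W (tproj T s)) (y := W (tproj T t))]

lemma PhiMap_cont (H : Hyp T Abar L0 L K w) {Z : ℝ → Lp (ℝ × ℝ) 2 mu01}
    (hZ : ContinuousOn Z (Set.Icc 0 T)) : ContinuousOn (PhiMap H Z) (Set.Icc 0 T) := by
  intro t0 ht0
  have key : ∀ s ∈ Set.Icc (0:ℝ) T, dist (PhiMap H Z s) (PhiMap H Z t0)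
      ≤ L0 * |s - t0| + 2 * L * dist (Z s) (Z t0) := by
    intro s hs
    have := dist_PhiMap' H Z s t0
    rwa [tproj_eq hs, tproj_eq ht0] at this
  have hZc : Filter.Tendsto (fun s => dist (Z s) (Z t0)) (nhdsWithin t0 (Set.Icc 0 T)) (nhds 0) := by
    have h := (hZ t0 ht0).dist (tendsto_const_nhds (x := Z t0))
    simpa using h
  have h1 : Filter.Tendsto (fun s : ℝ => |s - t0|) (nhdsWithin t0 (Set.Icc 0 T)) (nhds 0) := by
    have : Filter.Tendsto (fun s : ℝ => |s - t0|) (nhds t0) (nhds |t0 - t0|) :=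
      ((continuous_id.sub continuous_const).abs).tendsto t0
    simpa using this.mono_left nhdsWithin_le_nhds
  have hb : Filter.Tendsto (fun s => L0 * |s - t0| + 2 * L * dist (Z s) (Z t0))
      (nhdsWithin t0 (Set.Icc 0 T)) (nhds 0) := by
    have := (h1.const_mul L0).add (hZc.const_mul (2 * L))
    simpa [mul_comm] using this
  rw [ContinuousWithinAt, tendsto_iff_dist_tendsto_zero]
  refine squeeze_zero' (Filter.Eventually.of_forall fun s => dist_nonneg) ?_ hb
  filter_upwards [self_mem_nhdsWithin] with s hs
  exact key s hs

lemma PhiMap_memZ (H : Hyp T Abar L0 L K w) {Z : ℝ → Lp (ℝ × ℝ) 2 mu01}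
    (hZ : memZ T Abar Z) : memZ T Abar (PhiMap H Z) :=
  ⟨PhiMap_cont H hZ.1, fun t _ => PhiMap_bd H Z t⟩

-- bullet 1
lemma PhiMap_spec (H : Hyp T Abar L0 L K w) {Z : ℝ → Lp (ℝ × ℝ) 2 mu01}
    (hZ : memZ T Abar Z) {t : ℝ} (ht : t ∈ Set.Icc (0:ℝ) T) :
    ∀ᵐ x ∂mu01, PhiMap H Z t x = ∫ y in Set.Icc (0:ℝ) 1, w x y • K t y (Z t y) := by
  have hy : ∀ᵐ y ∂mu01, y ∈ Set.Icc (0:ℝ) 1 := by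
    show ∀ᵐ y ∂(volume.restrict (Set.Icc (0:ℝ) 1)), y ∈ Set.Icc (0:ℝ) 1
    exact ae_restrict_mem measurableSet_Icc
  filter_upwards [PhiMap_ae (W := Z) (t := t) H] with x hx
  rw [hx]
  show gfun K w T Abar Z t x = ∫ y, w x y • K t y (Z t y) ∂mu01
  rw [gfun]
  refine integral_congr_ae ?_
  filter_upwards [Grep_memZ_ae H hZ ht, hy] with y h1 h2
  show w x y • Kc K T Abar t y (Grep T Abar Z t y) = w x y • K t y (Z t y)
  rw [Kc, tproj_eq ht, tproj_eq h2]
  have hidem : clampP Abar (Grep T Abar Z t y) = Grep T Abar Z t y := by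
    rw [Grep, clampP, clampP]
    simp only
    rw [clampR_eq (abs_clampR H.hA.le _), clampR_eq (abs_clampR H.hA.le _)]
  rw [hidem, h1]

lemma D1_le_Znorm (H : Hyp T Abar L0 L K w) {Z1 Z2 : ℝ → Lp (ℝ × ℝ) 2 mu01}
    (hZ1 : memZ T Abar Z1) (hZ2 : memZ T Abar Z2) (t : ℝ) :
    D1 (Grep T Abar Z1 t) (Grep T Abar Z2 t) ≤ Znorm T (fun s => Z1 s - Z2 s) := by
  have htp : tproj T t ∈ Set.Icc (0:ℝ) T := tproj_mem H.hT.le t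
  have e1 : Grep T Abar Z1 t = Grep T Abar Z1 (tproj T t) := by
    have hW : Z1 (tproj T t) = Z1 (tproj T (tproj T t)) := by rw [tproj_idem H.hT.le]
    unfold Grep; simp only [hW]
  have e2 : Grep T Abar Z2 t = Grep T Abar Z2 (tproj T t) := by
    have hW : Z2 (tproj T t) = Z2 (tproj T (tproj T t)) := by rw [tproj_idem H.hT.le]
    unfold Grep; simp only [hW]
  rw [e1, e2]
  have e3 : D1 (Grep T Abar Z1 (tproj T t)) (Grep T Abar Z2 (tproj T t))
      = Jint (fun s => Z1 s - Z2 s) (tproj T t) := by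
    refine integral_congr_ae ?_
    filter_upwards [Grep_memZ_ae H hZ1 htp, Grep_memZ_ae H hZ2 htp,
      Lp.coeFn_sub (Z1 (tproj T t)) (Z2 (tproj T t))] with y a1 a2 a3
    rw [a1, a2, a3, Pi.sub_apply]
    simp [Prod.fst_sub, Prod.snd_sub]
  rw [e3, Znorm_eq]
  exact le_ciSup (Jint_bddAbove (Abar := Abar) fun s hs => ⟨hZ1.2 s hs, hZ2.2 s hs⟩)
    (⟨tproj T t, htp⟩ : Set.Icc (0:ℝ) T)

lemma dist_PhiMap_le_Znorm (H : Hyp T Abar L0 L K w) {Z1 Z2 : ℝ → Lp (ℝ × ℝ) 2 mu01}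
    (hZ1 : memZ T Abar Z1) (hZ2 : memZ T Abar Z2) (t : ℝ) :
    dist (PhiMap H Z1 t) (PhiMap H Z2 t) ≤ L * Znorm T (fun s => Z1 s - Z2 s) := by
  have h := dist_PhiMap H Z1 Z2 t t
  rw [sub_self, abs_zero, mul_zero, zero_add] at h
  exact h.trans (mul_le_mul_of_nonneg_left (D1_le_Znorm H hZ1 hZ2 t) H.hL)

lemma memZ_zero (H : Hyp T Abar L0 L K w) : memZ T Abar (fun _ => (0 : Lp (ℝ × ℝ) 2 mu01)) := by
  constructor
  · exact continuousOn_const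
  · intro t _
    filter_upwards [Lp.coeFn_zero (E := ℝ × ℝ) (p := 2) (μ := mu01)] with x hx
    rw [hx, Pi.zero_apply]
    constructor <;> simpa using H.hA.le

noncomputable def seqIter (H : Hyp T Abar L0 L K w) : ℕ → ℝ → Lp (ℝ × ℝ) 2 mu01
  | 0 => fun _ => 0
  | n + 1 => PhiMap H (seqIter H n)

lemma exists_fixed (H : Hyp T Abar L0 L K w) (hL1 : L < 1) :
    ∃ Z, memZ T Abar Z ∧ (∀ t ∈ Set.Icc (0:ℝ) T, PhiMap H Z t = Z t) ∧
      ∀ Z', memZ T Abar Z' → (∀ t ∈ Set.Icc (0:ℝ) T, PhiMap H Z' t = Z' t) →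
        ∀ t ∈ Set.Icc (0:ℝ) T, Z' t = Z t := by
  classical
  set seq : ℕ → ℝ → Lp (ℝ × ℝ) 2 mu01 := seqIter H with hseq
  have hmem : ∀ n, memZ T Abar (seq n) := by
    intro n
    induction n with
    | zero => exact memZ_zero H
    | succ n ih => exact PhiMap_memZ H ih
  set d : ℕ → ℝ := fun n => Znorm T (fun t => seq n t - seq (n + 1) t) with hd
  have hd0 : ∀ n, 0 ≤ d n := fun n => Znorm_nonneg _ _
  have hdstep : ∀ n, d (n + 1) ≤ L * d n := fun n =>
    Znorm_contract H (hmem n) (hmem (n + 1))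
  have hdgeo : ∀ n, d n ≤ L ^ n * d 0 := by
    intro n
    induction n with
    | zero => simp
    | succ n ih =>
      calc d (n + 1) ≤ L * d n := hdstep n
        _ ≤ L * (L ^ n * d 0) := mul_le_mul_of_nonneg_left ih H.hL
        _ = L ^ (n + 1) * d 0 := by ring
  have hgeom : ∀ t n, dist (seq (n + 1) t) (seq (n + 1 + 1) t) ≤ (L * d 0) * L ^ n := by
    intro t n
    calc dist (seq (n + 1) t) (seq (n + 1 + 1) t)
        ≤ L * d n := dist_PhiMap_le_Znorm H (hmem n) (hmem (n + 1)) t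
      _ ≤ L * (L ^ n * d 0) := mul_le_mul_of_nonneg_left (hdgeo n) H.hL
      _ = (L * d 0) * L ^ n := by ring
  have hcauchy : ∀ t, CauchySeq (fun n => seq (n + 1) t) := fun t =>
    cauchySeq_of_le_geometric L (L * d 0) hL1 (hgeom t)
  set Zl : ℝ → Lp (ℝ × ℝ) 2 mu01 :=
    fun t => Filter.limUnder Filter.atTop (fun n => seq (n + 1) t) with hZl
  have htend : ∀ t, Filter.Tendsto (fun n => seq (n + 1) t) Filter.atTop (nhds (Zl t)) :=
    fun t => (hcauchy t).tendsto_limUnder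
  have hdl : ∀ t n, dist (seq (n + 1) t) (Zl t) ≤ (L * d 0) * L ^ n / (1 - L) :=
    fun t n => dist_le_of_le_geometric_of_tendsto L (L * d 0) hL1 (hgeom t) (htend t) n
  have hunif : TendstoUniformlyOn (fun n t => seq (n + 1) t) Zl Filter.atTop
      (Set.Icc (0:ℝ) T) := by
    rw [Metric.tendstoUniformlyOn_iff]
    intro ε hε
    have hb : Filter.Tendsto (fun n : ℕ => (L * d 0) * L ^ n / (1 - L)) Filter.atTop
        (nhds 0) := by
      have h1 : Filter.Tendsto (fun n : ℕ => L ^ n) Filter.atTop (nhds 0) :=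
        tendsto_pow_atTop_nhds_zero_of_lt_one H.hL hL1
      have := (h1.const_mul (L * d 0)).div_const (1 - L)
      simpa using this
    filter_upwards [hb.eventually (gt_mem_nhds hε)] with n hn t _
    rw [dist_comm]
    exact lt_of_le_of_lt (hdl t n) hn
  have hZlcont : ContinuousOn Zl (Set.Icc 0 T) :=
    hunif.continuousOn (Filter.Eventually.of_forall fun n => (hmem (n + 1)).1).frequently
  have hfix : ∀ t ∈ Set.Icc (0:ℝ) T, PhiMap H Zl t = Zl t := by
    intro t ht
    have h1 : Filter.Tendsto (fun n => seq (n + 1 + 1) t) Filter.atTop (nhds (Zl t)) :=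
      (htend t).comp (Filter.tendsto_add_atTop_nat 1)
    have h2 : Filter.Tendsto (fun n => seq (n + 1 + 1) t) Filter.atTop
        (nhds (PhiMap H Zl t)) := by
      rw [tendsto_iff_dist_tendsto_zero]
      have hb : Filter.Tendsto (fun n => 2 * L * dist (seq (n + 1) t) (Zl t))
          Filter.atTop (nhds 0) := by
        have h3 : Filter.Tendsto (fun n => dist (seq (n + 1) t) (Zl t))
            Filter.atTop (nhds 0) := by
          rw [← tendsto_iff_dist_tendsto_zero]; exact htend t
        simpa using h3.const_mul (2 * L)
      refine squeeze_zero (fun n => dist_nonneg) (fun n => ?_) hb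
      calc dist (seq (n + 1 + 1) t) (PhiMap H Zl t)
          ≤ L0 * |tproj T t - tproj T t|
            + L * D1 (Grep T Abar (seq (n + 1)) t) (Grep T Abar Zl t) :=
            dist_PhiMap H (seq (n + 1)) Zl t t
        _ ≤ 0 + L * (2 * dist (seq (n + 1) (tproj T t)) (Zl (tproj T t))) := by
            rw [sub_self, abs_zero, mul_zero]
            exact add_le_add le_rfl
              (mul_le_mul_of_nonneg_left (D1_le_dist H (seq (n + 1)) Zl t t) H.hL)
        _ = 2 * L * dist (seq (n + 1) (tproj T t)) (Zl (tproj T t)) := by ring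
        _ = 2 * L * dist (seq (n + 1) t) (Zl t) := by rw [tproj_eq ht]
    exact tendsto_nhds_unique h2 h1
  have hZlmem : memZ T Abar Zl := by
    refine ⟨hZlcont, fun t ht => ?_⟩
    rw [← hfix t ht]
    exact PhiMap_bd H Zl t
  refine ⟨Zl, hZlmem, hfix, ?_⟩
  intro Z' hZ' hfix' t ht
  have hznn : Znorm T (fun s => Z' s - Zl s) ≤ L * Znorm T (fun s => Z' s - Zl s) := by
    have e : Znorm T (fun s => PhiMap H Z' s - PhiMap H Zl s)
        = Znorm T (fun s => Z' s - Zl s) := by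
      rw [Znorm_eq, Znorm_eq]
      refine iSup_congr fun s => ?_
      rw [Jint, Jint, hfix' s.1 s.2, hfix s.1 s.2]
    exact e.symm.trans_le (Znorm_contract H hZ' hZlmem)
  have hz0 : Znorm T (fun s => Z' s - Zl s) = 0 := by
    have := Znorm_nonneg T (fun s => Z' s - Zl s)
    nlinarith
  have hJ0 : Jint (fun s => Z' s - Zl s) t = 0 := by
    have hle : Jint (fun s => Z' s - Zl s) t ≤ 0 := by
      rw [← hz0, Znorm_eq]
      exact le_ciSup (Jint_bddAbove (Abar := Abar) fun s hs => ⟨hZ'.2 s hs, hZlmem.2 s hs⟩)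
        (⟨t, ht⟩ : Set.Icc (0:ℝ) T)
    exact le_antisymm hle (Jint_nonneg _ _)
  have hae : ∀ᵐ x ∂mu01, |((Z' t - Zl t : Lp (ℝ × ℝ) 2 mu01) x).1|
      + |((Z' t - Zl t : Lp (ℝ × ℝ) 2 mu01) x).2| = 0 := by
    rw [Jint] at hJ0
    exact (integral_eq_zero_iff_of_nonneg (fun x => by positivity) (int_abs_coe _)).mp hJ0
  refine Lp.ext ?_
  filter_upwards [hae, Lp.coeFn_sub (Z' t) (Zl t)] with x h1 h2
  rw [h2, Pi.sub_apply] at h1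
  simp only [Prod.fst_sub, Prod.snd_sub] at h1
  have n1 := abs_nonneg ((Z' t x).1 - (Zl t x).1)
  have n2 := abs_nonneg ((Z' t x).2 - (Zl t x).2)
  have e1 : |(Z' t x).1 - (Zl t x).1| = 0 := by linarith
  have e2 : |(Z' t x).2 - (Zl t x).2| = 0 := by linarith
  rw [abs_eq_zero, sub_eq_zero] at e1 e2
  exact Prod.ext e1 e2

end main

/-- the graphon aggregate map `Φ(Z)(t)(x) = ∫₀¹ w(x,y) K(t,y,Z(t)(y)) dy` built
from a measurable, `Ā`-bound preserving kernel `K` that is `L₀`-Lipschitz in time and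
`L`-Lipschitz in the aggregate variable (1-norms) sends `𝒵` into `𝒵` and is `L`-Lipschitz
for `‖·‖_𝒵`; hence if `L < 1` it has a unique fixed point in `𝒵` (unique as an element of
`C([0,T]; L²)`, i.e. up to values outside `[0,T]`). -/
theorem aggregate_map_contraction
    (T Abar L0 L : ℝ) (hT : 0 < T) (hA : 0 < Abar) (hL0 : 0 ≤ L0) (hL : 0 ≤ L)
    (K : ℝ → ℝ → ℝ × ℝ → ℝ × ℝ)
    (hKmeas : ∀ (t : ℝ) (z : ℝ × ℝ), Measurable fun y => K t y z)
    (hKbd : ∀ (t y : ℝ) (z : ℝ × ℝ), |z.1| ≤ Abar → |z.2| ≤ Abar →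
      |(K t y z).1| ≤ Abar ∧ |(K t y z).2| ≤ Abar)
    (hKlip : ∀ y ∈ Set.Icc (0:ℝ) 1, ∀ t ∈ Set.Icc (0:ℝ) T, ∀ t' ∈ Set.Icc (0:ℝ) T,
      ∀ z z' : ℝ × ℝ, |z.1| ≤ Abar → |z.2| ≤ Abar → |z'.1| ≤ Abar → |z'.2| ≤ Abar →
        |(K t y z).1 - (K t' y z').1| + |(K t y z).2 - (K t' y z').2|
          ≤ L0 * |t - t'| + L * (|z.1 - z'.1| + |z.2 - z'.2|))
    (w : ℝ → ℝ → ℝ) (hwmeas : Measurable (Function.uncurry w))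
    (hw : ∀ x y, w x y ∈ Set.Icc (0:ℝ) 1) :
    ∃ Phi : (ℝ → Lp (ℝ × ℝ) 2 mu01) → (ℝ → Lp (ℝ × ℝ) 2 mu01),
      (∀ Z, memZ T Abar Z → ∀ t ∈ Set.Icc (0:ℝ) T,
        ∀ᵐ x ∂mu01, Phi Z t x = ∫ y in Set.Icc (0:ℝ) 1, w x y • K t y (Z t y)) ∧
      (∀ Z, memZ T Abar Z → memZ T Abar (Phi Z)) ∧
      (∀ Z1 Z2, memZ T Abar Z1 → memZ T Abar Z2 →
        Znorm T (fun t => Phi Z1 t - Phi Z2 t) ≤ L * Znorm T (fun t => Z1 t - Z2 t)) ∧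
      (L < 1 →
        ∃ Z, memZ T Abar Z ∧ (∀ t ∈ Set.Icc (0:ℝ) T, Phi Z t = Z t) ∧
          ∀ Z', memZ T Abar Z' → (∀ t ∈ Set.Icc (0:ℝ) T, Phi Z' t = Z' t) →
            ∀ t ∈ Set.Icc (0:ℝ) T, Z' t = Z t) := by
  have H : Hyp T Abar L0 L K w := ⟨hT, hA, hL0, hL, hKmeas, hKbd, hKlip, hwmeas, hw⟩
  refine ⟨PhiMap H, ?_, ?_, ?_, ?_⟩
  · exact fun Z hZ t ht => PhiMap_spec H hZ ht
  · exact fun Z hZ => PhiMap_memZ H hZ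
  · exact fun Z1 Z2 h1 h2 => Znorm_contract H h1 h2
  · exact fun hL1 => exists_fixed H hL1
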